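/- arXiv:1005.1398 — 5 statements merged into one kernel-verified Lean document; each statement's English description precedes it below -/
import Mathlib

section
/- Let {f_i}_{i=1}^∞ be identically distributed nonnegative random variables with a Cauchy tail, i.e., there exists C₀ > 0 such that P(f_i > n) < C₀/n for all n ∈ ℕ. Then for every ε > 0 there exist K > 0 and N ∈ ℕ such that for every n > N, P((1/n) Σ_{i=1}^n f_i > K log n) < ε. -/
open MeasureTheory Finset

open scoped ENNReal

/-!
Truncate at level `M = n²`. Some `f i` with `i ≤ n` exceeds `n²` with probability at most
`n · C₀ / n² = C₀ / n`. Below that level, the Cauchy tail and the harmonic bound give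
`E[min (f i) M] ≤ ∑_{k < M} P(f i > k) ≤ 1 + C₀ (1 + log M)`, so Markov's inequality
bounds the probability that the truncated sum exceeds `n K log n` by
`(1 + C₀ + 2 C₀ log n) / (K log n)`, which is small once `K` is a large multiple of `1 + C₀`
and `n` is large.
-/

theorem min_le_sum_range_if_lt (x : ℝ) (M : ℕ) :
    min x M ≤ ∑ k ∈ range M, if (k : ℝ) < x then (1 : ℝ) else 0 := by
  induction M with
  | zero => simp
  | succ M ih =>
    rw [sum_range_succ, Nat.cast_succ]
    split_ifs with hMx
    · have : min x (M + 1) ≤ min x M + 1 := by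
        rcases le_total x M with h | h
        · rw [min_eq_left h]; exact (min_le_left _ _).trans (by linarith)
        · rw [min_eq_right h]; exact min_le_right _ _
      linarith
    · rw [min_eq_left (by linarith), add_zero]
      exact (min_eq_left (not_lt.1 hMx)).symm.trans_le ih

theorem sum_range_inv_succ_le_one_add_log (m : ℕ) :
    ∑ k ∈ range m, ((k : ℝ) + 1)⁻¹ ≤ 1 + Real.log ((m : ℝ) + 1) := by
  have h : (harmonic m : ℝ) = ∑ k ∈ range m, ((k : ℝ) + 1)⁻¹ := by simp [harmonic]
  rw [← h]
  refine (harmonic_le_one_add_log m).trans ?_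
  rcases Nat.eq_zero_or_pos m with rfl | hm
  · simp
  · gcongr; linarith

section

variable {Ω : Type*} [MeasurableSpace Ω] {P : Measure Ω}

theorem lintegral_ofReal_min_le_sum_measure_lt {g : Ω → ℝ} (hg : Measurable g) (M : ℕ) :
    ∫⁻ x, ENNReal.ofReal (min (g x) M) ∂P ≤ ∑ k ∈ range M, P {x | (k : ℝ) < g x} := by
  have hset (k : ℕ) : MeasurableSet {x | (k : ℝ) < g x} := measurableSet_lt measurable_const hg
  calc ∫⁻ x, ENNReal.ofReal (min (g x) M) ∂P
      ≤ ∫⁻ x, ∑ k ∈ range M, {y | (k : ℝ) < g y}.indicator 1 x ∂P := by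
        refine lintegral_mono fun x => ?_
        refine (ENNReal.ofReal_le_ofReal (min_le_sum_range_if_lt (g x) M)).trans_eq ?_
        rw [ENNReal.ofReal_sum_of_nonneg fun k _ => by positivity]
        simp [Set.indicator_apply, apply_ite ENNReal.ofReal]
    _ = ∑ k ∈ range M, P {x | (k : ℝ) < g x} := by
        rw [lintegral_finsetSum (f := fun k : ℕ => {y | (k : ℝ) < g y}.indicator 1) _
          fun k _ => measurable_const.indicator (hset k)]
        simp_rw [lintegral_indicator_one (hset _)]

theorem lintegral_ofReal_min_le_of_tail [IsProbabilityMeasure P] {g : Ω → ℝ}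
    (hg : Measurable g) {C : ℝ} (hC : 0 ≤ C)
    (htail : ∀ k : ℕ, 0 < k → P {x | (k : ℝ) < g x} ≤ ENNReal.ofReal (C / k)) (M : ℕ) :
    ∫⁻ x, ENNReal.ofReal (min (g x) M) ∂P ≤ ENNReal.ofReal (1 + C * (1 + Real.log M)) := by
  refine (lintegral_ofReal_min_le_sum_measure_lt hg M).trans ?_
  rcases M with _ | m
  · simp
  calc ∑ k ∈ range (m + 1), P {x | (k : ℝ) < g x}
      = ∑ k ∈ range m, P {x | ((k + 1 : ℕ) : ℝ) < g x} + P {x | ((0 : ℕ) : ℝ) < g x} :=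
        sum_range_succ' _ _
    _ ≤ ∑ k ∈ range m, ENNReal.ofReal (C * ((k : ℝ) + 1)⁻¹) + 1 := by
        gcongr with k
        · simpa [div_eq_mul_inv] using htail (k + 1) k.succ_pos
        · exact prob_le_one
    _ = ENNReal.ofReal (C * ∑ k ∈ range m, ((k : ℝ) + 1)⁻¹ + 1) := by
        rw [mul_sum, ENNReal.ofReal_add (by positivity) zero_le_one,
          ENNReal.ofReal_sum_of_nonneg fun k _ => by positivity, ENNReal.ofReal_one]
    _ ≤ ENNReal.ofReal (1 + C * (1 + Real.log (m + 1 : ℕ))) := by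
        have := mul_le_mul_of_nonneg_left (sum_range_inv_succ_le_one_add_log m) hC
        exact ENNReal.ofReal_le_ofReal (by push_cast; linarith)

theorem measure_lt_sum_le_tail_add_lintegral_min {ι : Type*} (s : Finset ι)
    {f : ι → Ω → ℝ} (hf : ∀ i, Measurable (f i)) {a : ℝ} (ha : 0 < a) (M : ℝ) :
    P {x | a < ∑ i ∈ s, f i x} ≤ ∑ i ∈ s, P {x | M < f i x} +
      (∑ i ∈ s, ∫⁻ x, ENNReal.ofReal (min (f i x) M) ∂P) / ENNReal.ofReal a := by
  set S : Ω → ℝ≥0∞ := fun x => ∑ i ∈ s, ENNReal.ofReal (min (f i x) M)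
  have hS : Measurable S :=
    Finset.measurable_sum _ fun i _ => ((hf i).min measurable_const).ennreal_ofReal
  have hsub : {x | a < ∑ i ∈ s, f i x} ⊆
      (⋃ i ∈ s, {x | M < f i x}) ∪ {x | ENNReal.ofReal a ≤ S x} := by
    intro x hx
    by_cases hbig : ∃ i ∈ s, M < f i x
    · left
      simpa using hbig
    · right
      simp only [not_exists, not_and, not_lt] at hbig
      calc ENNReal.ofReal a
          ≤ ENNReal.ofReal (∑ i ∈ s, f i x) := ENNReal.ofReal_le_ofReal hx.le
        _ ≤ ∑ i ∈ s, ENNReal.ofReal (f i x) :=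
          le_sum_of_subadditive _ ENNReal.ofReal_zero.le (fun _ _ => ENNReal.ofReal_add_le) _ _
        _ = S x := sum_congr rfl fun i hi => by rw [min_eq_left (hbig i hi)]
  calc P {x | a < ∑ i ∈ s, f i x}
      ≤ P (⋃ i ∈ s, {x | M < f i x}) + P {x | ENNReal.ofReal a ≤ S x} :=
        (measure_mono hsub).trans (measure_union_le _ _)
    _ ≤ _ := by
        gcongr
        · exact measure_biUnion_finset_le _ _
        · refine (meas_ge_le_lintegral_div hS.aemeasurable ?_ ENNReal.ofReal_ne_top).trans_eq ?_
          · simpa using ha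
          · rw [lintegral_finsetSum _ fun i _ => ((hf i).min measurable_const).ennreal_ofReal]

theorem measure_lt_sum_le_of_tail [IsProbabilityMeasure P] {ι : Type*} (s : Finset ι)
    {f : ι → Ω → ℝ} (hf : ∀ i, Measurable (f i)) {C : ℝ} (hC : 0 ≤ C)
    (htail : ∀ i, ∀ k : ℕ, 0 < k → P {x | (k : ℝ) < f i x} ≤ ENNReal.ofReal (C / k))
    {a : ℝ} (ha : 0 < a) {M : ℕ} (hM : 0 < M) :
    P {x | a < ∑ i ∈ s, f i x} ≤
      ENNReal.ofReal (#s * (C / M) + #s * (1 + C * (1 + Real.log M)) / a) := by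
  have hlog : 0 ≤ Real.log M := Real.log_nonneg (by exact_mod_cast hM)
  calc P {x | a < ∑ i ∈ s, f i x}
      ≤ ∑ i ∈ s, P {x | (M : ℝ) < f i x} +
          (∑ i ∈ s, ∫⁻ x, ENNReal.ofReal (min (f i x) M) ∂P) / ENNReal.ofReal a :=
        measure_lt_sum_le_tail_add_lintegral_min s hf ha M
    _ ≤ ∑ i ∈ s, ENNReal.ofReal (C / M) +
          (∑ i ∈ s, ENNReal.ofReal (1 + C * (1 + Real.log M))) / ENNReal.ofReal a := by
        gcongr with i _ i _
        · exact htail i M hM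
        · exact lintegral_ofReal_min_le_of_tail (hf i) hC (htail i) M
    _ = _ := by
        simp only [sum_const, nsmul_eq_mul]
        rw [ENNReal.ofReal_add (p := #s * (C / M)) (by positivity) (by positivity),
          ENNReal.ofReal_div_of_pos ha,
          ENNReal.ofReal_mul (by positivity), ENNReal.ofReal_mul (by positivity),
          ENNReal.ofReal_natCast]

end

/-- The bound of `measure_lt_sum_le_of_tail` for `#s = n`, `M = n²`, `a = n K log n` with
`K = 6 (1 + C) / ε`. -/
theorem truncation_bound_lt_of_large {C ε : ℝ} (hC : 0 ≤ C) (hε : 0 < ε) {n : ℕ}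
    (hn : 2 ≤ n) (hnC : 3 * C / ε < n) :
    n * (C / (n ^ 2 : ℕ)) + n * (1 + C * (1 + Real.log (n ^ 2 : ℕ))) /
      (n * (6 * (1 + C) / ε * Real.log n)) < ε := by
  have hn0 : (0 : ℝ) < n := by positivity
  have hlog : 1 / 2 < Real.log n := by
    have : Real.log 2 ≤ Real.log n := Real.log_le_log two_pos (by exact_mod_cast hn)
    linarith [Real.log_two_gt_d9]
  have hsplit : n * (C / (n ^ 2 : ℕ)) + n * (1 + C * (1 + Real.log (n ^ 2 : ℕ))) /
      (n * (6 * (1 + C) / ε * Real.log n)) =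
      C / n + ε / (6 * Real.log n) + ε * C / (3 * (1 + C)) := by
    rw [Nat.cast_pow, Real.log_pow]
    field_simp
    ring
  have h1 : C / n < ε / 3 := by
    rw [div_lt_iff₀ hε] at hnC
    rw [div_lt_iff₀ hn0]
    linarith
  have h2 : ε / (6 * Real.log n) < ε / 3 := by
    rw [div_lt_div_iff₀ (by positivity) (by norm_num)]
    nlinarith
  have h3 : ε * C / (3 * (1 + C)) < ε / 3 := by
    rw [div_lt_div_iff₀ (by positivity) (by norm_num)]
    nlinarith
  linarith

theorem cauchy_tail_average_log_bound_general
    {Ω : Type*} [MeasurableSpace Ω] (P : Measure Ω) [IsProbabilityMeasure P]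
    (f : ℕ → Ω → ℝ) (hmeas : ∀ i, Measurable (f i))
    (C₀ : ℝ)
    (htail : ∀ i, ∀ n : ℕ, 0 < n → P {x | (n : ℝ) < f i x} < ENNReal.ofReal (C₀ / n)) :
    ∀ ε > (0 : ℝ), ∃ K > (0 : ℝ), ∃ N : ℕ, ∀ n > N,
      P {x | K * Real.log n < (1 / n) * ∑ i ∈ Icc 1 n, f i x} < ENNReal.ofReal ε := by
  have hC₀ : 0 < C₀ := by
    simpa using ENNReal.ofReal_pos.1 (pos_of_gt (htail 0 1 one_pos))
  intro ε hε
  set K := 6 * (1 + C₀) / ε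
  refine ⟨K, by positivity, ⌈3 * C₀ / ε⌉₊ + 1, fun n hn => ?_⟩
  have hn2 : 2 ≤ n := by omega
  have hnC : 3 * C₀ / ε < n :=
    (Nat.le_ceil _).trans_lt (by exact_mod_cast (by omega : ⌈3 * C₀ / ε⌉₊ < n))
  have hn0 : (0 : ℝ) < n := by positivity
  have hlog : 0 < Real.log n := Real.log_pos (by exact_mod_cast hn2)
  have hevent : {x | K * Real.log n < (1 / n) * ∑ i ∈ Icc 1 n, f i x} =
      {x | n * (K * Real.log n) < ∑ i ∈ Icc 1 n, f i x} := by
    ext x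
    rw [Set.mem_ofPred_eq, Set.mem_ofPred_eq, one_div, inv_mul_eq_div, lt_div_iff₀ hn0, mul_comm]
  rw [hevent]
  calc _ ≤ _ := measure_lt_sum_le_of_tail (Icc 1 n) hmeas hC₀.le
          (fun i k hk => (htail i k hk).le) (by positivity) (M := n ^ 2) (by positivity)
    _ < ENNReal.ofReal ε := by
        rw [ENNReal.ofReal_lt_ofReal_iff hε, Nat.card_Icc, Nat.add_sub_cancel]
        exact truncation_bound_lt_of_large hC₀.le hε hn2 hnC

/-- Identically distributed nonnegative random variables with a Cauchy tail:
the empirical average up to time `n` is at most `K log n` up to probability `ε`. -/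
theorem cauchy_tail_average_log_bound
    {Ω : Type*} [MeasurableSpace Ω] (P : Measure Ω) [IsProbabilityMeasure P]
    (f : ℕ → Ω → ℝ) (hmeas : ∀ i, Measurable (f i))
    (hnonneg : ∀ i x, 0 ≤ f i x)
    (hident : ∀ i j, Measure.map (f i) P = Measure.map (f j) P)
    (C₀ : ℝ) (hC₀ : 0 < C₀)
    (htail : ∀ i, ∀ n : ℕ, 0 < n → P {x | (n : ℝ) < f i x} < ENNReal.ofReal (C₀ / n)) :
    ∀ ε > (0 : ℝ), ∃ K > (0 : ℝ), ∃ N : ℕ, ∀ n > N,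
      P {x | K * Real.log n < (1 / n) * ∑ i ∈ Icc 1 n, f i x} < ENNReal.ofReal ε :=
  cauchy_tail_average_log_bound_general P f hmeas C₀ htail
end

section
/- Let (A_n)_{n≥1} be a sequence of events on a probability space such that P(A_n) > 1 − ε for all sufficiently large n, and let (a_n)_{n≥1} be a sequence of nonnegative reals with Σ a_n = ∞. Then P(Σ_{n=1}^∞ 1_{A_n} · a_n = ∞) ≥ 1 − ε. -/
/-!
Let `S = ∑ₙ 1_{Aₙ} aₙ`. On a set `B` where `S` is bounded, `∫_B S = ∑ₙ aₙ P(Aₙ ∩ B)`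
is finite. If `P(B) > ε`, then eventually `P(Aₙ ∩ B) ≥ P(B) - ε > 0`, which makes that series
diverge. Hence each `{S ≤ M}` has probability at most `ε`, and so does their union `{S < ∞}`.
-/

open MeasureTheory Filter
open scoped ENNReal

namespace ENNReal

theorem tsum_nat_add_eq_top {c : ℕ → ℝ≥0∞} (hc : ∀ n, c n ≠ ∞) (hsum : ∑' n, c n = ∞)
    (N : ℕ) : ∑' n, c (n + N) = ∞ := by
  have hhead : ∑ i ∈ Finset.range N, c i ≠ ∞ := ENNReal.sum_ne_top.mpr fun i _ => hc i
  by_contra htail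
  rw [← ENNReal.summable.sum_add_tsum_nat_add' (k := N)] at hsum
  exact ENNReal.add_ne_top.mpr ⟨hhead, htail⟩ hsum

theorem tsum_mul_eq_top_of_eventually_le {c d : ℕ → ℝ≥0∞} {δ : ℝ≥0∞} (hc : ∀ n, c n ≠ ∞)
    (hsum : ∑' n, c n = ∞) (hδ : δ ≠ 0) (hd : ∀ᶠ n in atTop, δ ≤ d n) :
    ∑' n, c n * d n = ∞ := by
  obtain ⟨N, hN⟩ := eventually_atTop.mp hd
  refine top_unique ?_
  calc ∞ = ∑' n, c (n + N) * δ := by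
        rw [ENNReal.tsum_mul_right, tsum_nat_add_eq_top hc hsum N, top_mul hδ]
    _ ≤ ∑' n, c (n + N) * d (n + N) :=
        ENNReal.tsum_le_tsum fun n => mul_le_mul_right (hN _ (Nat.le_add_left _ _)) _
    _ ≤ ∑' n, c n * d n :=
        ENNReal.tsum_comp_le_tsum_of_injective (add_left_injective N) (fun n => c n * d n)

end ENNReal

namespace MeasureTheory

variable {Ω : Type*} [MeasurableSpace Ω] {μ : Measure Ω}

theorem measure_sub_le_measure_inter [IsProbabilityMeasure μ] {A B : Set Ω} {η : ℝ≥0∞}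
    (hB : MeasurableSet B) (hA : 1 ≤ μ A + η) : μ B - η ≤ μ (A ∩ B) := by
  rw [tsub_le_iff_right]
  refine (ENNReal.add_le_add_iff_left (measure_ne_top μ A)).mp ?_
  calc μ A + μ B = μ (A ∪ B) + μ (A ∩ B) := (measure_union_add_inter A hB).symm
    _ ≤ 1 + μ (A ∩ B) := add_le_add_left prob_le_one _
    _ ≤ μ A + η + μ (A ∩ B) := add_le_add_left hA _
    _ = μ A + (μ (A ∩ B) + η) := by ring

theorem setLIntegral_tsum_indicator_const {A : ℕ → Set Ω} (hA : ∀ n, MeasurableSet (A n))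
    (c : ℕ → ℝ≥0∞) (B : Set Ω) :
    ∫⁻ x in B, ∑' n, (A n).indicator (fun _ => c n) x ∂μ = ∑' n, c n * μ (A n ∩ B) := by
  rw [lintegral_tsum fun n => (measurable_const.indicator (hA n)).aemeasurable]
  congr 1 with n
  rw [lintegral_indicator_const (hA n), Measure.restrict_apply (hA n)]

theorem measure_setOf_ne_top_eq_iSup {f : Ω → ℝ≥0∞} :
    μ {x | f x ≠ ∞} = ⨆ M : ℕ, μ {x | f x ≤ M} := by
  have hunion : {x | f x ≠ ∞} = ⋃ M : ℕ, {x | f x ≤ M} := by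
    ext x
    simp only [Set.mem_ofPred_eq, Set.mem_iUnion]
    exact ⟨fun hx => (ENNReal.exists_nat_gt hx).imp fun _ => le_of_lt,
      fun ⟨M, hM⟩ => ne_top_of_le_ne_top (ENNReal.natCast_ne_top M) hM⟩
  rw [hunion]
  exact Monotone.measure_iUnion fun M M' h x (hx : f x ≤ M) =>
    hx.trans (Nat.cast_le.mpr h)

theorem setLIntegral_setOf_le_ne_top [IsFiniteMeasure μ] (f : Ω → ℝ≥0∞) {M : ℝ≥0∞}
    (hM : M ≠ ∞) : ∫⁻ x in {x | f x ≤ M}, f x ∂μ ≠ ∞ :=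
  ne_top_of_le_ne_top (ENNReal.mul_ne_top hM (measure_ne_top μ _))
    ((setLIntegral_mono measurable_const fun _ hx => hx).trans_eq (setLIntegral_const _ _))

theorem measure_le_of_setLIntegral_tsum_indicator_ne_top [IsProbabilityMeasure μ]
    {A : ℕ → Set Ω} (hA : ∀ n, MeasurableSet (A n)) {c : ℕ → ℝ≥0∞} (hc : ∀ n, c n ≠ ∞)
    (hsum : ∑' n, c n = ∞) {η : ℝ≥0∞} (hlarge : ∀ᶠ n in atTop, 1 ≤ μ (A n) + η)
    {B : Set Ω} (hB : MeasurableSet B)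
    (hfin : ∫⁻ x in B, ∑' n, (A n).indicator (fun _ => c n) x ∂μ ≠ ∞) : μ B ≤ η := by
  by_contra! hη
  refine hfin ?_
  rw [setLIntegral_tsum_indicator_const hA]
  exact ENNReal.tsum_mul_eq_top_of_eventually_le hc hsum (tsub_pos_of_lt hη).ne'
    (hlarge.mono fun n hn => measure_sub_le_measure_inter hB hn)

end MeasureTheory

open MeasureTheory

theorem indicator_series_diverges_general
    {Ω : Type*} [MeasurableSpace Ω] (P : Measure Ω) [IsProbabilityMeasure P]
    (A : ℕ → Set Ω) (hA : ∀ n, MeasurableSet (A n))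
    (ε : ℝ) (hε : 0 < ε)
    (hPA : ∃ N : ℕ, ∀ n ≥ N, 1 - ε < (P (A n)).toReal)
    (a : ℕ → ℝ)
    (hdiv : ∑' n, ENNReal.ofReal (a n) = ⊤) :
    ENNReal.ofReal (1 - ε) ≤
      P {x | ∑' n, Set.indicator (A n) (fun _ => ENNReal.ofReal (a n)) x = ⊤} := by
  set S : Ω → ℝ≥0∞ := fun x => ∑' n, (A n).indicator (fun _ => ENNReal.ofReal (a n)) x
  have hS : Measurable S := Measurable.tsum fun n => measurable_const.indicator (hA n)
  have hone_sub : ENNReal.ofReal (1 - ε) = 1 - ENNReal.ofReal ε := by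
    rw [ENNReal.ofReal_sub _ hε.le, ENNReal.ofReal_one]
  have hlarge : ∀ᶠ n in atTop, 1 ≤ P (A n) + ENNReal.ofReal ε := by
    obtain ⟨N, hN⟩ := hPA
    filter_upwards [eventually_ge_atTop N] with n hn
    rw [← tsub_le_iff_right, ← hone_sub, ← ENNReal.ofReal_toReal (measure_ne_top P (A n))]
    exact ENNReal.ofReal_le_ofReal (hN n hn).le
  have hfinite : P {x | S x ≠ ⊤} ≤ ENNReal.ofReal ε := by
    rw [measure_setOf_ne_top_eq_iSup]
    exact iSup_le fun M => measure_le_of_setLIntegral_tsum_indicator_ne_top hA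
      (fun _ => ENNReal.ofReal_ne_top) hdiv hlarge (hS measurableSet_Iic)
      (setLIntegral_setOf_le_ne_top S (ENNReal.natCast_ne_top M))
  calc ENNReal.ofReal (1 - ε) = 1 - ENNReal.ofReal ε := hone_sub
    _ ≤ 1 - P {x | S x ≠ ⊤} := tsub_le_tsub_left hfinite 1
    _ = P {x | S x = ⊤} := by
        have hD : MeasurableSet {x | S x = ⊤} := hS (measurableSet_singleton ⊤)
        rw [← compl_compl {x | S x = ⊤}, prob_compl_eq_one_sub hD.compl]
        rfl

/-- If `P(Aₙ) > 1 - ε` eventually and `Σ aₙ = ∞` with `aₙ ≥ 0`, then with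
probability at least `1 - ε` the series `Σ 1_{Aₙ} aₙ` diverges. -/
theorem indicator_series_diverges
    {Ω : Type*} [MeasurableSpace Ω] (P : Measure Ω) [IsProbabilityMeasure P]
    (A : ℕ → Set Ω) (hA : ∀ n, MeasurableSet (A n))
    (ε : ℝ) (hε : 0 < ε)
    (hPA : ∃ N : ℕ, ∀ n ≥ N, 1 - ε < (P (A n)).toReal)
    (a : ℕ → ℝ) (ha : ∀ n, 0 ≤ a n)
    (hdiv : ∑' n, ENNReal.ofReal (a n) = ⊤) :
    ENNReal.ofReal (1 - ε) ≤
      P {x | ∑' n, Set.indicator (A n) (fun _ => ENNReal.ofReal (a n)) x = ⊤} :=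
  indicator_series_diverges_general P A hA ε hε hPA a hdiv
end

section
/- Let A be a finite nonempty subset of ℤ^d, and for 1 ≤ j ≤ d let Π^j : ℤ^d → ℤ^{d−1} be the projection deleting the j-th coordinate and A_j = Π^j(A). Then there exists a constant C > 0 depending only on d such that max_{1 ≤ j ≤ d} |A_j| ≥ C · |A|^{(d−1)/d}. -/
/-!
For `A ⊆ αᵈ` put `σ(A) = ∑ⱼ |Πʲ(A)|`; then `|A|ᵈ⁻¹ ≤ σ(A)ᵈ`, by induction on `d`. Slice `A`
along the last coordinate into fibres `Sₜ`. Each fibre embeds into `Πˡᵃˢᵗ(A)`, so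
`|Sₜ| ≤ a := |Πˡᵃˢᵗ(A)|`, and by induction `|Sₜ|ᵈ⁻² ≤ σ'(Sₜ)ᵈ⁻¹`, where `σ'` sums over the
projections keeping the last coordinate. Hence `|Sₜ| ≤ a^{1/(d-1)} σ'(Sₜ)`. Those projections
send distinct fibres to disjoint sets, so `∑ₜ σ'(Sₜ) = σ(A) - a`, and summing gives
`|A|ᵈ⁻¹ ≤ a (σ(A) - a)ᵈ⁻¹ ≤ σ(A)ᵈ`. Since `σ(A) ≤ d · maxⱼ |Πʲ(A)|`, the theorem holds with
`C = 1/d`.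
-/

open Finset NNReal

theorem Finset.card_image_eq_sum_card_image_filter {β γ κ : Type*} [DecidableEq γ] [DecidableEq κ]
    (A : Finset β) (g : β → γ) {p : β → κ} {q : γ → κ} (h : ∀ x, q (g x) = p x) :
    #(A.image g) = ∑ t ∈ A.image p, #({x ∈ A | p x = t}.image g) := by
  rw [card_eq_sum_card_image q, image_image, show q ∘ g = p from funext h]
  refine sum_congr rfl fun t _ => ?_
  simp only [filter_image, h]

theorem NNReal.sum_pow_le_mul_sum_pow {ι : Type*} (T : Finset ι) {s m : ι → ℝ≥0} {L : ℝ≥0}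
    {k : ℕ} (hk : k ≠ 0) (h : ∀ t ∈ T, s t ^ k ≤ L * m t ^ k) :
    (∑ t ∈ T, s t) ^ k ≤ L * (∑ t ∈ T, m t) ^ k := by
  set c := L ^ (k⁻¹ : ℝ)
  have hc : c ^ k = L := NNReal.rpow_inv_natCast_pow L hk
  have hle : ∀ t ∈ T, s t ≤ c * m t := fun t ht =>
    (pow_le_pow_iff_left₀ zero_le zero_le hk).1 (by rw [mul_pow, hc]; exact h t ht)
  calc (∑ t ∈ T, s t) ^ k ≤ (c * ∑ t ∈ T, m t) ^ k := by
        rw [mul_sum]; gcongr with t ht; exact hle t ht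
    _ = L * (∑ t ∈ T, m t) ^ k := by rw [mul_pow, hc]

theorem Real.rpow_div_add_one_le_of_pow_le {n : ℕ} {x y : ℝ} (hx : 0 ≤ x) (hy : 0 ≤ y)
    (h : x ^ n ≤ y ^ (n + 1)) : x ^ ((n : ℝ) / (n + 1)) ≤ y := by
  calc x ^ ((n : ℝ) / (n + 1)) = (x ^ n) ^ (((n + 1 : ℕ) : ℝ)⁻¹) := by
        rw [← Real.rpow_natCast_mul hx, div_eq_mul_inv, Nat.cast_succ]
    _ ≤ (y ^ (n + 1)) ^ (((n + 1 : ℕ) : ℝ)⁻¹) := by gcongr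
    _ = y := Real.pow_rpow_inv_natCast hy n.succ_ne_zero

namespace Fin

variable {α : Type*} {n : ℕ}

theorem init_removeNth_castSucc (j : Fin (n + 1)) (f : Fin (n + 2) → α) :
    init (removeNth j.castSucc f) = removeNth j (init f) := by
  funext i
  simp [init, removeNth, castSucc_succAbove_castSucc]

theorem removeNth_castSucc_apply_last (j : Fin (n + 1)) (f : Fin (n + 2) → α) :
    removeNth j.castSucc f (last n) = f (last (n + 1)) := by
  simp [removeNth, succAbove_ne_last_last (castSucc_lt_last j).ne]

theorem init_injOn_of_apply_last_eq {S : Set (Fin (n + 1) → α)} {t : α}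
    (hS : ∀ f ∈ S, f (last n) = t) : S.InjOn init := by
  intro f hf g hg hfg
  rw [← snoc_init_self f, ← snoc_init_self g, hfg, hS f hf, hS g hg]

end Fin

section

variable {α : Type*} [DecidableEq α]

theorem card_image_init_pow_le {n : ℕ}
    (ih : ∀ B : Finset (Fin (n + 1) → α), B.Nonempty →
      #B ^ n ≤ (∑ j : Fin (n + 1), #(B.image j.removeNth)) ^ (n + 1))
    {S : Finset (Fin (n + 2) → α)} (hS : S.Nonempty) :
    #(S.image Fin.init) ^ n ≤ (∑ j : Fin (n + 1), #(S.image j.castSucc.removeNth)) ^ (n + 1) := by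
  refine (ih _ (hS.image _)).trans (Nat.pow_le_pow_left (sum_le_sum fun j _ => ?_) _)
  calc #((S.image Fin.init).image j.removeNth)
      = #((S.image j.castSucc.removeNth).image Fin.init) := by
        simp only [image_image, Function.comp_def, Fin.init_removeNth_castSucc]
    _ ≤ _ := card_image_le

theorem card_pow_le_sum_card_image_removeNth_pow :
    ∀ {n : ℕ} (A : Finset (Fin (n + 1) → α)), A.Nonempty →
      #A ^ n ≤ (∑ j : Fin (n + 1), #(A.image j.removeNth)) ^ (n + 1)
  | 0, A, hA => by simpa [Nat.one_le_iff_ne_zero] using hA.ne_empty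
  | n + 1, A, hA => by
    set T := A.image (· (Fin.last (n + 1)))
    set slice : α → Finset (Fin (n + 2) → α) := fun t => {f ∈ A | f (Fin.last (n + 1)) = t}
    set a := #(A.image Fin.init)
    set b := ∑ j : Fin (n + 1), #(A.image j.castSucc.removeNth)
    have hslice_card : ∀ t, #((slice t).image Fin.init) = #(slice t) := fun t =>
      card_image_of_injOn (Fin.init_injOn_of_apply_last_eq fun f hf => (mem_filter.1 hf).2)
    have hslice_pow : ∀ t ∈ T, #(slice t) ^ (n + 1) ≤
        a * (∑ j : Fin (n + 1), #((slice t).image j.castSucc.removeNth)) ^ (n + 1) := by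
      intro t ht
      rw [pow_succ', ← hslice_card]
      refine Nat.mul_le_mul (card_le_card (image_subset_image (filter_subset _ _))) ?_
      exact card_image_init_pow_le card_pow_le_sum_card_image_removeNth_pow
          (fiber_nonempty_iff_mem_image.2 ht)
    have hsum : ∑ t ∈ T, ∑ j : Fin (n + 1), #((slice t).image j.castSucc.removeNth) = b := by
      rw [sum_comm]
      exact sum_congr rfl fun j _ =>
        (card_image_eq_sum_card_image_filter A _ (q := (· (Fin.last n)))
          (Fin.removeNth_castSucc_apply_last j)).symm
    calc #A ^ (n + 1) ≤ a * b ^ (n + 1) := by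
          rw [card_eq_sum_card_image (· (Fin.last (n + 1))) A, ← hsum]
          have hroot := NNReal.sum_pow_le_mul_sum_pow T (s := fun t => (#(slice t) : ℝ≥0))
            (m := fun t => (∑ j : Fin (n + 1), #((slice t).image j.castSucc.removeNth) : ℕ))
            (L := a) n.succ_ne_zero (fun t ht => by exact_mod_cast hslice_pow t ht)
          exact_mod_cast hroot
      _ ≤ (b + a) * (b + a) ^ (n + 1) := by gcongr <;> omega
      _ = _ := by rw [← pow_succ', Fin.sum_univ_castSucc, funext (Fin.removeNth_last (α := α))]

end

/-- Discrete Loomis–Whitney type inequality: some coordinate projection of a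
finite nonempty subset of `ℤ^d` (deleting one coordinate) has cardinality at
least `C · |A|^{(d-1)/d}`, for a constant `C > 0` depending only on `d`. -/
theorem max_projection_card_ge
    (n : ℕ) :
    ∃ C > (0 : ℝ), ∀ A : Finset (Fin (n + 1) → ℤ), A.Nonempty →
      ∃ j : Fin (n + 1),
        C * (A.card : ℝ) ^ ((n : ℝ) / (n + 1)) ≤
          ((A.image (fun f => j.removeNth f)).card : ℝ) := by
  refine ⟨1 / (n + 1), by positivity, fun A hA => ?_⟩
  obtain ⟨j, -, hj⟩ := exists_max_image univ (fun j : Fin (n + 1) => #(A.image j.removeNth))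
    univ_nonempty
  refine ⟨j, ?_⟩
  have hsum : ∑ i : Fin (n + 1), #(A.image i.removeNth) ≤ (n + 1) * #(A.image j.removeNth) := by
    simpa using sum_le_sum hj
  have hpow : (#A : ℝ) ^ n ≤ ((n + 1) * #(A.image j.removeNth)) ^ (n + 1) := by
    exact_mod_cast (card_pow_le_sum_card_image_removeNth_pow A hA).trans
      (Nat.pow_le_pow_left hsum _)
  rw [one_div, inv_mul_le_iff₀ (by positivity)]
  exact Real.rpow_div_add_one_le_of_pow_le (by positivity) (by positivity) hpow
end

section
/- Let Λ be a self-adjoint operator on a real Hilbert space H with spectrum contained in [−1, 1], and let V ∈ H. Suppose there is a constant C₀ < ∞ such that |⟨f, V⟩| ≤ C₀ ⟨f, (1 − Λ)f⟩^{1/2} for all f ∈ H. Then the spectral measure μ_V of Λ associated with V satisfies ∫_{[−1,1]} (1 − λ)^{−1} dμ_V(λ) ≤ C₀². -/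
open MeasureTheory
open scoped RealInnerProductSpace
open Polynomial Filter Topology Set

/-! Test the form bound against `f = q(Λ) V` for the truncated geometric series
`q(x) = ∑_{i < 2m} (r x)^i`, `|r| < 1`. Then `⟪f, V⟫ = ∫ q dμ` and
`⟪f, (1 - Λ) f⟫ = ∫ (1 - x) q² dμ`, and on `[-1, 1]` one has
`(1 - x) q(x) ≤ 2 (1 - (r x)^(2m)) / (1 + r) ≤ 2 / (1 + r)`, so the hypothesis gives
`∫ q dμ ≤ C₀² · 2 / (1 + r)`. Fatou's lemma, first as `m → ∞` and then as `r → 1⁻`,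
turns this into the bound on `∫ (1 - x)⁻¹ dμ`. -/

theorem IsSelfAdjoint.aeval {R A : Type*} [CommSemiring R] [StarRing R] [TrivialStar R]
    [Semiring A] [StarRing A] [Algebra R A] [StarModule R A] {a : A} (ha : IsSelfAdjoint a)
    (p : R[X]) :
    IsSelfAdjoint (aeval a p) := by
  induction p using Polynomial.induction_on' with
  | add p q hp hq => simpa only [map_add] using hp.add hq
  | monomial n c =>
    simpa only [aeval_monomial, Algebra.algebraMap_eq_smul_one, smul_mul_assoc, one_mul]
      using (IsSelfAdjoint.all c).smul (ha.pow n)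

theorem le_sq_mul_of_le_mul_sqrt {A B C K : ℝ} (hA : 0 ≤ A) (hK : 0 ≤ K) (hBA : B ≤ K * A)
    (h : A ≤ C * √B) : A ≤ C ^ 2 * K := by
  rcases hA.eq_or_lt with rfl | hA
  · positivity
  · have hB : 0 ≤ B := by
      by_contra! hB
      rw [Real.sqrt_eq_zero'.mpr hB.le] at h
      linarith
    have : A * A ≤ C ^ 2 * K * A := by
      calc A * A ≤ (C * √B) ^ 2 := by nlinarith
        _ = C ^ 2 * B := by rw [mul_pow, Real.sq_sqrt hB]
        _ ≤ C ^ 2 * (K * A) := by gcongr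
        _ = C ^ 2 * K * A := by ring
    exact le_of_mul_le_mul_right this hA

theorem Continuous.integrable_of_ae_mem_compact {α E : Type*} [MeasurableSpace α]
    [TopologicalSpace α] [OpensMeasurableSpace α] [T2Space α] [NormedAddCommGroup E]
    {μ : Measure α} [IsFiniteMeasureOnCompacts μ] {f : α → E} {s : Set α} (hf : Continuous f)
    (hs : IsCompact s) (h : ∀ᵐ x ∂μ, x ∈ s) : Integrable f μ := by
  rw [← Measure.restrict_eq_self_of_ae_mem h]
  exact hf.continuousOn.integrableOn_compact hs

theorem lintegral_le_of_tendsto {α ι : Type*} [MeasurableSpace α] {μ : Measure α}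
    {u : Filter ι} [u.IsCountablyGenerated] [u.NeBot] {F : ι → α → ENNReal} {f : α → ENNReal}
    {c : ι → ENNReal} {c₀ : ENNReal} (hF : ∀ i, AEMeasurable (F i) μ)
    (hlim : ∀ᵐ x ∂μ, Tendsto (fun i => F i x) u (𝓝 (f x))) (hc : Tendsto c u (𝓝 c₀))
    (hle : ∀ᶠ i in u, ∫⁻ x, F i x ∂μ ≤ c i) : ∫⁻ x, f x ∂μ ≤ c₀ :=
  calc ∫⁻ x, f x ∂μ = ∫⁻ x, liminf (fun i => F i x) u ∂μ :=
        lintegral_congr_ae (hlim.mono fun x hx => hx.liminf_eq.symm)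
    _ ≤ liminf (fun i => ∫⁻ x, F i x ∂μ) u := lintegral_liminf_le' hF
    _ ≤ liminf c u := liminf_le_liminf hle
    _ = c₀ := hc.liminf_eq

theorem abs_mul_lt_one_of_mem_Icc {r x : ℝ} (hr : |r| < 1) (hx : x ∈ Icc (-1) 1) :
    |r * x| < 1 := by
  rw [abs_mul]
  exact mul_lt_one_of_nonneg_of_lt_one_left (abs_nonneg r) hr (abs_le.mpr hx)

theorem geom_sum_even_nonneg_and_le {r x : ℝ} (hr : |r| < 1) (hx : x ∈ Icc (-1) 1) (m : ℕ) :
    0 ≤ ∑ i ∈ Finset.range (2 * m), (r * x) ^ i ∧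
    (1 - x) * (∑ i ∈ Finset.range (2 * m), (r * x) ^ i) ^ 2
      ≤ 2 / (1 + r) * ∑ i ∈ Finset.range (2 * m), (r * x) ^ i := by
  set s := ∑ i ∈ Finset.range (2 * m), (r * x) ^ i
  obtain ⟨hr₁, hr₂⟩ := abs_lt.mp hr
  obtain ⟨hrx₁, hrx₂⟩ := abs_lt.mp (abs_mul_lt_one_of_mem_Icc hr hx)
  have hgeom : (1 - r * x) * s = 1 - (r * x) ^ (2 * m) := mul_neg_geom_sum _ _
  have hpow : 0 ≤ (r * x) ^ (2 * m) := by rw [pow_mul]; positivity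
  have hpow' : (r * x) ^ (2 * m) ≤ 1 := by
    rw [pow_mul]; exact pow_le_one₀ (sq_nonneg _) (by nlinarith)
  have hs : 0 ≤ s := nonneg_of_mul_nonneg_right (by linarith) (by linarith : 0 < 1 - r * x)
  have hkernel : (1 + r) * (1 - x) ≤ 2 * (1 - r * x) := by nlinarith [hx.1, hx.2]
  have hs_le : (1 - x) * s ≤ 2 / (1 + r) := by
    rw [le_div_iff₀ (by linarith)]
    nlinarith
  refine ⟨hs, ?_⟩
  calc (1 - x) * s ^ 2 = ((1 - x) * s) * s := by ring
    _ ≤ 2 / (1 + r) * s := by gcongr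

section SpectralMeasure

variable {H : Type*} [NormedAddCommGroup H] [InnerProductSpace ℝ H] [CompleteSpace H]
  {Λ : H →L[ℝ] H} {V : H} {μ : Measure ℝ} [IsFiniteMeasure μ] {C₀ : ℝ}

theorem integral_eval_le_of_inner_le_sqrt (hΛ : IsSelfAdjoint Λ)
    (hsupp : ∀ᵐ x ∂μ, x ∈ Icc (-1 : ℝ) 1)
    (hμ : ∀ p : ℝ[X], ⟪V, aeval Λ p V⟫ = ∫ x, p.eval x ∂μ)
    (hbound : ∀ f : H, |⟪f, V⟫| ≤ C₀ * √⟪f, (1 - Λ) f⟫) {q : ℝ[X]} {K : ℝ} (hK : 0 ≤ K)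
    (hq : ∀ᵐ x ∂μ, 0 ≤ q.eval x ∧ (1 - x) * q.eval x ^ 2 ≤ K * q.eval x) :
    ∫ x, q.eval x ∂μ ≤ C₀ ^ 2 * K := by
  have hint (p : ℝ[X]) : Integrable (fun x => p.eval x) μ :=
    p.continuous.integrable_of_ae_mem_compact isCompact_Icc hsupp
  set f := aeval Λ q V
  have hfV : ⟪f, V⟫ = ∫ x, q.eval x ∂μ := by rw [real_inner_comm, hμ]
  have hform : ⟪f, (1 - Λ) f⟫ = ∫ x, (q * ((1 - X) * q)).eval x ∂μ := by
    have hf_apply : (1 - Λ) f = aeval Λ ((1 - X) * q) V := by simp [f]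
    have hsymm := (hΛ.aeval q).isSymmetric V (aeval Λ ((1 - X) * q) V)
    rw [ContinuousLinearMap.coe_coe] at hsymm
    rw [hf_apply, hsymm, ← hμ]
    simp only [map_mul]
    rfl
  have hA : 0 ≤ ∫ x, q.eval x ∂μ := integral_nonneg_of_ae (hq.mono fun x hx => hx.1)
  have hBA : ∫ x, (q * ((1 - X) * q)).eval x ∂μ ≤ K * ∫ x, q.eval x ∂μ := by
    rw [← integral_const_mul]
    refine integral_mono_ae (hint _) ((hint q).const_mul K) (hq.mono fun x hx => ?_)
    simpa only [eval_mul, eval_sub, eval_one, eval_X, sq, mul_left_comm, mul_assoc] using hx.2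
  exact le_sq_mul_of_le_mul_sqrt hA hK hBA (hfV ▸ hform ▸ (le_abs_self _).trans (hbound f))

theorem lintegral_inv_one_sub_mul_le (hΛ : IsSelfAdjoint Λ)
    (hsupp : ∀ᵐ x ∂μ, x ∈ Icc (-1 : ℝ) 1)
    (hμ : ∀ p : ℝ[X], ⟪V, aeval Λ p V⟫ = ∫ x, p.eval x ∂μ)
    (hbound : ∀ f : H, |⟪f, V⟫| ≤ C₀ * √⟪f, (1 - Λ) f⟫) {r : ℝ} (hr : |r| < 1) :
    ∫⁻ x, (ENNReal.ofReal (1 - r * x))⁻¹ ∂μ ≤ ENNReal.ofReal (C₀ ^ 2 * (2 / (1 + r))) := by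
  refine lintegral_le_of_tendsto (u := atTop)
    (F := fun m x => ENNReal.ofReal (∑ i ∈ Finset.range (2 * m), (r * x) ^ i))
    (fun m => by fun_prop) ?_ tendsto_const_nhds (Eventually.of_forall fun m => ?_)
  · filter_upwards [hsupp] with x hx
    have hrx := abs_mul_lt_one_of_mem_Icc hr hx
    rw [← ENNReal.ofReal_inv_of_pos (by linarith [abs_lt.mp hrx])]
    exact ENNReal.tendsto_ofReal ((hasSum_geometric_of_abs_lt_one hrx).tendsto_sum_nat.comp
      (tendsto_id.const_mul_atTop' two_pos))
  · set q : ℝ[X] := ∑ i ∈ Finset.range (2 * m), (C r * X) ^ i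
    have heval (x : ℝ) : q.eval x = ∑ i ∈ Finset.range (2 * m), (r * x) ^ i := by
      simp [q, eval_finsetSum]
    have hq := integral_eval_le_of_inner_le_sqrt hΛ hsupp hμ hbound (q := q)
      (div_nonneg zero_le_two (by linarith [abs_lt.mp hr] : (0 : ℝ) ≤ 1 + r))
      (hsupp.mono fun x hx => by simpa only [heval] using geom_sum_even_nonneg_and_le hr hx m)
    simp only [heval] at hq
    rw [← ofReal_integral_eq_lintegral_ofReal]
    · exact ENNReal.ofReal_le_ofReal hq
    · exact Continuous.integrable_of_ae_mem_compact (by fun_prop) isCompact_Icc hsupp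
    · exact hsupp.mono fun x hx => (geom_sum_even_nonneg_and_le hr hx m).1

end SpectralMeasure

theorem spectral_measure_inv_one_sub_integrable_general
    {H : Type*} [NormedAddCommGroup H] [InnerProductSpace ℝ H] [CompleteSpace H]
    (Λ : H →L[ℝ] H) (hΛ : IsSelfAdjoint Λ)
    (V : H) (μ : Measure ℝ) [IsFiniteMeasure μ]
    (hsupp : μ (Set.Icc (-1 : ℝ) 1)ᶜ = 0)
    (hμ : ∀ p : Polynomial ℝ,
      ⟪V, Polynomial.aeval Λ p V⟫ = ∫ x, p.eval x ∂μ)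
    (C₀ : ℝ)
    (hbound : ∀ f : H, |⟪f, V⟫| ≤ C₀ * Real.sqrt ⟪f, (1 - Λ) f⟫) :
    ∫⁻ l, (ENNReal.ofReal (1 - l))⁻¹ ∂μ ≤ ENNReal.ofReal (C₀ ^ 2) := by
  have hae : ∀ᵐ x ∂μ, x ∈ Icc (-1 : ℝ) 1 := mem_ae_iff.mpr hsupp
  refine lintegral_le_of_tendsto (u := 𝓝[<] 1)
    (F := fun r x => (ENNReal.ofReal (1 - r * x))⁻¹)
    (c := fun r => ENNReal.ofReal (C₀ ^ 2 * (2 / (1 + r))))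
    (fun r => by fun_prop) (ae_of_all _ fun x => ?_) ?_ ?_
  · refine (ENNReal.tendsto_ofReal ?_).inv
    have hcont : Continuous fun r : ℝ => 1 - r * x := by fun_prop
    exact (hcont.tendsto' 1 _ (by ring)).mono_left nhdsWithin_le_nhds
  · have hcont : ContinuousAt (fun r : ℝ => C₀ ^ 2 * (2 / (1 + r))) 1 := by
      fun_prop (disch := norm_num)
    refine ENNReal.tendsto_ofReal (hcont.tendsto.mono_left nhdsWithin_le_nhds |>.trans ?_)
    norm_num
  · filter_upwards [Ioo_mem_nhdsLT (by norm_num : (0 : ℝ) < 1)] with r hr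
    exact lintegral_inv_one_sub_mul_le hΛ hae hμ hbound (abs_lt.mpr ⟨by linarith [hr.1], hr.2⟩)

/-- Kipnis–Varadhan spectral bound: if `Λ` is self-adjoint with spectrum in
`[-1,1]`, `μ` is the spectral measure of `Λ` at `V` (characterized by its
action on polynomials), and `|⟨f,V⟩| ≤ C₀ ⟨f,(1-Λ)f⟩^{1/2}` for all `f`, then
`∫ (1-λ)⁻¹ dμ(λ) ≤ C₀²`. -/
theorem spectral_measure_inv_one_sub_integrable
    {H : Type*} [NormedAddCommGroup H] [InnerProductSpace ℝ H] [CompleteSpace H]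
    (Λ : H →L[ℝ] H) (hΛ : IsSelfAdjoint Λ)
    (hspec : spectrum ℝ Λ ⊆ Set.Icc (-1 : ℝ) 1)
    (V : H) (μ : Measure ℝ) [IsFiniteMeasure μ]
    (hsupp : μ (Set.Icc (-1 : ℝ) 1)ᶜ = 0)
    (hμ : ∀ p : Polynomial ℝ,
      ⟪V, Polynomial.aeval Λ p V⟫ = ∫ x, p.eval x ∂μ)
    (C₀ : ℝ) (hC₀ : 0 ≤ C₀)
    (hbound : ∀ f : H, |⟪f, V⟫| ≤ C₀ * Real.sqrt ⟪f, (1 - Λ) f⟫) :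
    ∫⁻ l, (ENNReal.ofReal (1 - l))⁻¹ ∂μ ≤ ENNReal.ofReal (C₀ ^ 2) :=
  spectral_measure_inv_one_sub_integrable_general Λ hΛ V μ hsupp hμ C₀ hbound
end

section
/- Let M : ℕ → ℝ⁺ and Q : ℕ → ℝ with M(0) = Q(0) = 0, and suppose there exist constants c₁, c₂, c₃ > 0, K₁ ≥ 0, d ≥ 1 and N ∈ ℕ such that for all n > N: (i) Q(n) ≥ c₁ + (d/2) log(n − K₁), (ii) M(n) ≥ c₂ e^{Q(n)/d}, and (iii) (M(n+1) − M(n))² ≤ c₃ (Q(n+1) − Q(n)) with Q nondecreasing. Then there exists c > 0 such that M(n) ≤ c√n for all n ∈ ℕ. -/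
private lemma sqrt_add_le' {a b : ℝ} (ha : 0 ≤ a) (hb : 0 ≤ b) :
    Real.sqrt (a + b) ≤ Real.sqrt a + Real.sqrt b := by
  have h : a + b ≤ (Real.sqrt a + Real.sqrt b) ^ 2 := by
    nlinarith [Real.sq_sqrt ha, Real.sq_sqrt hb, Real.sqrt_nonneg a, Real.sqrt_nonneg b]
  calc Real.sqrt (a + b) ≤ Real.sqrt ((Real.sqrt a + Real.sqrt b) ^ 2) :=
        Real.sqrt_le_sqrt h
    _ = Real.sqrt a + Real.sqrt b := by
        rw [Real.sqrt_sq (by positivity)]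

private lemma sum_sqrt_le_sqrt_card_mul_sum {t : ℕ} {a : ℕ → ℝ} (ha : ∀ i, 0 ≤ a i) :
    ∑ i ∈ Finset.range t, Real.sqrt (a i) ≤
      Real.sqrt (t * ∑ i ∈ Finset.range t, a i) := by
  have hsum : 0 ≤ ∑ i ∈ Finset.range t, a i := Finset.sum_nonneg fun i _ => ha i
  have hS : 0 ≤ ∑ i ∈ Finset.range t, Real.sqrt (a i) :=
    Finset.sum_nonneg fun i _ => Real.sqrt_nonneg _
  rw [show (t : ℝ) * ∑ i ∈ Finset.range t, a i =
      (Finset.range t).card * ∑ i ∈ Finset.range t, a i by simp]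
  rw [← Real.sqrt_sq hS]
  apply Real.sqrt_le_sqrt
  calc (∑ i ∈ Finset.range t, Real.sqrt (a i)) ^ 2
      ≤ (Finset.range t).card * ∑ i ∈ Finset.range t, (Real.sqrt (a i)) ^ 2 :=
        sq_sum_le_card_mul_sum_sq
    _ = (Finset.range t).card * ∑ i ∈ Finset.range t, a i := by
        congr 1; exact Finset.sum_congr rfl fun i _ => Real.sq_sqrt (ha i)

private lemma quadratic_absorb {A E F s2 u y : ℝ} (hA : 0 < A) (hE : 0 ≤ E) (hF : 0 ≤ F)
    (hu : 0 ≤ u) (hy : 0 ≤ y) (hs2sq : s2 * s2 = 2) (hs2pos : 0 < s2)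
    (hA8 : 8 * (E + 2 * (F * F)) ≤ A)
    (hx1 : y * y ≤ A * (u * u) / s2 + E * (u * u) + F * u * y) :
    y * y ≤ A * (u * u) := by
  have hs2le : s2 ≤ 3 / 2 := by nlinarith
  have hAMGM : F * u * y ≤ y * y / 8 + 2 * (F * F) * (u * u) := by
    nlinarith [sq_nonneg (y - 4 * F * u)]
  have hdiv : A * (u * u) / s2 = A * (u * u) * s2 / 2 := by
    rw [div_eq_div_iff (ne_of_gt hs2pos) two_ne_zero]
    linear_combination (-(A * (u * u))) * hs2sq
  have hw : 0 ≤ u * u := mul_nonneg hu hu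
  have hco : A * s2 / 2 + (E + 2 * (F * F)) ≤ (7 / 8) * A := by nlinarith
  have h2 : (A * s2 / 2 + (E + 2 * (F * F))) * (u * u) ≤ (7 / 8) * A * (u * u) :=
    mul_le_mul_of_nonneg_right hco hw
  nlinarith [hx1, hAMGM, hdiv, h2]

set_option maxHeartbeats 2000000 in
/-- Abstract entropy–displacement argument: if `Q(n) ≥ c₁ + (d/2) log(n - K₁)`,
`M(n) ≥ c₂ e^{Q(n)/d}`, and `(M(n+1) - M(n))² ≤ c₃ (Q(n+1) - Q(n))` for all
`n > N`, with `Q` nondecreasing, then `M(n) ≤ c √n` for some `c > 0`. -/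
theorem diffusive_upper_bound
    (M Q : ℕ → ℝ) (hMnonneg : ∀ n, 0 ≤ M n)
    (hM0 : M 0 = 0) (hQ0 : Q 0 = 0)
    (c₁ c₂ c₃ : ℝ) (hc₁ : 0 < c₁) (hc₂ : 0 < c₂) (hc₃ : 0 < c₃)
    (K₁ : ℝ) (hK₁ : 0 ≤ K₁) (d : ℕ) (hd : 1 ≤ d) (N : ℕ)
    (hQmono : Monotone Q)
    (hQlower : ∀ n : ℕ, n > N → c₁ + ((d : ℝ) / 2) * Real.log (n - K₁) ≤ Q n)
    (hMlower : ∀ n : ℕ, n > N → c₂ * Real.exp (Q n / d) ≤ M n)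
    (hincr : ∀ n : ℕ, n > N → (M (n + 1) - M n) ^ 2 ≤ c₃ * (Q (n + 1) - Q n)) :
    ∃ c > (0 : ℝ), ∀ n : ℕ, M n ≤ c * Real.sqrt n := by
  -- threshold
  set n₁ : ℕ := 2 * N + 4 * ⌈K₁⌉₊ + 16 with hn₁def
  -- constants
  set C₀ : ℝ := ((d : ℝ) / 2) * Real.log 4 + d * |Real.log c₂| with hC₀def
  have hC₀ : 0 ≤ C₀ := by
    have h4 : (0:ℝ) ≤ Real.log 4 := Real.log_nonneg (by norm_num)
    have : (0:ℝ) ≤ (d:ℝ) := Nat.cast_nonneg d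
    positivity
  set E : ℝ := Real.sqrt (c₃ * C₀) with hEdef
  set F : ℝ := Real.sqrt (c₃ * d) with hFdef
  have hE : 0 ≤ E := Real.sqrt_nonneg _
  have hF : 0 ≤ F := Real.sqrt_nonneg _
  set B : ℝ := ∑ i ∈ Finset.range (n₁ + 1), M i with hBdef
  have hB : 0 ≤ B := Finset.sum_nonneg fun i _ => hMnonneg i
  set A : ℝ := 8 * (E + 2 * F ^ 2) + B + 1 with hAdef
  have hA : 0 < A := by positivity
  refine ⟨A, hA, ?_⟩
  -- main claim by strong induction
  have main : ∀ n : ℕ, M n ≤ A * Real.sqrt n := by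
    intro n
    induction n using Nat.strong_induction_on with
    | _ n ih =>
      rcases Nat.eq_zero_or_pos n with rfl | hn0
      · simp [hM0]
      by_cases hbase : n ≤ n₁
      · -- base case: M n ≤ B ≤ A, and 1 ≤ √n
        have h1 : M n ≤ B := by
          refine Finset.single_le_sum (fun i _ => hMnonneg i) ?_
          exact Finset.mem_range.mpr (by omega)
        have h2 : (1 : ℝ) ≤ Real.sqrt n := by
          rw [show (1:ℝ) = Real.sqrt 1 by simp]
          exact Real.sqrt_le_sqrt (by exact_mod_cast hn0)
        have hBA : B ≤ A := by
          have : 0 ≤ 8 * (E + 2 * F ^ 2) := by positivity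
          rw [hAdef]; linarith
        calc M n ≤ B := h1
          _ = B * 1 := by ring
          _ ≤ A * Real.sqrt n := by
            apply mul_le_mul hBA h2 (by norm_num) (le_of_lt hA)
      · -- inductive case
        push_neg at hbase
        set m : ℕ := n / 2 with hmdef
        have hmn : m < n := Nat.div_lt_self (by omega) (by norm_num)
        have hmN : m > N := by omega
        have hnN : n > N := by omega
        have hIH : M m ≤ A * Real.sqrt m := ih m hmn
        -- basic real facts
        have hn16 : (16 : ℝ) ≤ (n : ℝ) := by exact_mod_cast (by omega : 16 ≤ n)
        have hnpos : (0:ℝ) < (n:ℝ) := by linarith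
        have hsn : (0:ℝ) < Real.sqrt n := Real.sqrt_pos.mpr hnpos
        have hmhalf : (m : ℝ) ≤ (n : ℝ) / 2 := by
          rw [hmdef]; exact_mod_cast Nat.cast_div_le
        have hmlow : ((n : ℝ) - 1) / 2 ≤ (m : ℝ) := by
          have : n ≤ 2 * m + 1 := by omega
          have : (n : ℝ) ≤ 2 * m + 1 := by exact_mod_cast this
          linarith
        have hK₁n : K₁ ≤ (⌈K₁⌉₊ : ℝ) := Nat.le_ceil K₁
        have hn4K : 4 * K₁ + 2 ≤ (n : ℝ) := by
          have : 4 * ⌈K₁⌉₊ + 2 ≤ n := by omega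
          have h2 : ((4 * ⌈K₁⌉₊ + 2 : ℕ) : ℝ) ≤ (n : ℝ) := by exact_mod_cast this
          push_cast at h2
          linarith
        have hmK : (n : ℝ) / 4 ≤ (m : ℝ) - K₁ := by linarith
        have hmKpos : (0:ℝ) < (m : ℝ) - K₁ := by linarith
        -- step 1: M n positive
        have hMn_lb := hMlower n hnN
        have hMnpos : 0 < M n :=
          lt_of_lt_of_le (by positivity) hMn_lb
        set x := M n with hxdef
        -- step 2: telescoping + Cauchy-Schwarz
        set t : ℕ := n - m with htdef
        have hmt : m + t = n := by omega
        have htn : (t : ℝ) ≤ (n : ℝ) := by exact_mod_cast (by omega : t ≤ n)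
        have hQnm : 0 ≤ Q n - Q m := by
          have := hQmono (le_of_lt hmn); linarith
        have key1 : x - M m ≤ Real.sqrt (t * (c₃ * (Q n - Q m))) := by
          have htel : x - M m = ∑ i ∈ Finset.range t, (M (m + i + 1) - M (m + i)) := by
            rw [show (∑ i ∈ Finset.range t, (M (m + i + 1) - M (m + i)))
                = ∑ i ∈ Finset.range t, ((fun j => M (m + j)) (i+1) - (fun j => M (m+j)) i) by
                  apply Finset.sum_congr rfl; intro i _; simp [Nat.add_assoc]]
            rw [Finset.sum_range_sub (fun j => M (m + j))]
            simp [hmt, hxdef]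
          have hstep : ∀ i ∈ Finset.range t,
              M (m + i + 1) - M (m + i) ≤ Real.sqrt (c₃ * (Q (m + i + 1) - Q (m + i))) := by
            intro i _
            have hki : m + i > N := by omega
            have h := hincr (m + i) hki
            have habs : M (m + i + 1) - M (m + i) ≤ |M (m + i + 1) - M (m + i)| := le_abs_self _
            calc M (m + i + 1) - M (m + i) ≤ |M (m + i + 1) - M (m + i)| := habs
              _ = Real.sqrt ((M (m + i + 1) - M (m + i)) ^ 2) := (Real.sqrt_sq_eq_abs _).symm
              _ ≤ Real.sqrt (c₃ * (Q (m + i + 1) - Q (m + i))) := Real.sqrt_le_sqrt h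
          have hCS : ∑ i ∈ Finset.range t, Real.sqrt (c₃ * (Q (m + i + 1) - Q (m + i)))
              ≤ Real.sqrt (t * ∑ i ∈ Finset.range t, c₃ * (Q (m + i + 1) - Q (m + i))) := by
            apply sum_sqrt_le_sqrt_card_mul_sum
            intro i
            have : Q (m + i) ≤ Q (m + i + 1) := hQmono (Nat.le_succ _)
            nlinarith
          have hTsum : ∑ i ∈ Finset.range t, c₃ * (Q (m + i + 1) - Q (m + i))
              = c₃ * (Q n - Q m) := by
            rw [← Finset.mul_sum]
            congr 1
            rw [show (∑ i ∈ Finset.range t, (Q (m + i + 1) - Q (m + i)))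
                = ∑ i ∈ Finset.range t, ((fun j => Q (m + j)) (i+1) - (fun j => Q (m+j)) i) by
                  apply Finset.sum_congr rfl; intro i _; simp [Nat.add_assoc]]
            rw [Finset.sum_range_sub (fun j => Q (m + j))]
            simp [hmt]
          calc x - M m = ∑ i ∈ Finset.range t, (M (m + i + 1) - M (m + i)) := htel
            _ ≤ ∑ i ∈ Finset.range t, Real.sqrt (c₃ * (Q (m + i + 1) - Q (m + i))) :=
                Finset.sum_le_sum hstep
            _ ≤ Real.sqrt (t * ∑ i ∈ Finset.range t, c₃ * (Q (m + i + 1) - Q (m + i))) := hCS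
            _ = Real.sqrt (t * (c₃ * (Q n - Q m))) := by rw [hTsum]
        -- step 3: bound Q n - Q m
        have hQn_ub : Q n ≤ d * (Real.log x - Real.log c₂) := by
          have h := hMn_lb
          have hexp : Real.exp (Q n / d) ≤ x / c₂ := by
            rw [le_div_iff₀ hc₂]; linarith
          have hlog : Q n / d ≤ Real.log (x / c₂) := by
            rw [← Real.log_exp (Q n / d)]
            exact Real.log_le_log (Real.exp_pos _) hexp
          have hdpos : (0:ℝ) < (d:ℝ) := by exact_mod_cast hd
          rw [Real.log_div (ne_of_gt hMnpos) (ne_of_gt hc₂)] at hlog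
          calc Q n = d * (Q n / d) := by field_simp
            _ ≤ d * (Real.log x - Real.log c₂) := by
                apply mul_le_mul_of_nonneg_left hlog (le_of_lt hdpos)
        have hQm_lb : c₁ + ((d : ℝ) / 2) * Real.log ((m : ℝ) - K₁) ≤ Q m := hQlower m hmN
        have hlogx : Real.log x ≤ x / Real.sqrt n + (1/2) * Real.log n - 1 := by
          have hxs : 0 < x / Real.sqrt n := by positivity
          have h1 : Real.log (x / Real.sqrt n) ≤ x / Real.sqrt n - 1 :=
            Real.log_le_sub_one_of_pos hxs
          rw [Real.log_div (ne_of_gt hMnpos) (ne_of_gt hsn)] at h1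
          rw [Real.log_sqrt (le_of_lt hnpos)] at h1
          linarith
        have hlog4 : Real.log (n : ℝ) - Real.log ((m : ℝ) - K₁) ≤ Real.log 4 := by
          have h1 : (n : ℝ) ≤ 4 * ((m : ℝ) - K₁) := by linarith
          have h2 : Real.log (n : ℝ) ≤ Real.log (4 * ((m : ℝ) - K₁)) :=
            Real.log_le_log hnpos h1
          rw [Real.log_mul (by norm_num) (ne_of_gt hmKpos)] at h2
          linarith
        have hdpos : (0:ℝ) < (d:ℝ) := by exact_mod_cast hd
        have hbracket : Q n - Q m ≤ d * x / Real.sqrt n + C₀ := by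
          have h1 : Q n - Q m ≤ d * (Real.log x - Real.log c₂) - c₁
              - ((d:ℝ)/2) * Real.log ((m:ℝ) - K₁) := by linarith
          have h3 : d * (Real.log x - Real.log c₂)
              ≤ d * (x / Real.sqrt n + (1/2) * Real.log n - 1 + |Real.log c₂|) := by
            apply mul_le_mul_of_nonneg_left _ (le_of_lt hdpos)
            have := neg_le_abs (Real.log c₂)
            linarith
          have h3' : d * (Real.log x - Real.log c₂)
              ≤ d * x / Real.sqrt n + ((d:ℝ)/2) * Real.log n - d + d * |Real.log c₂| := by
            have expand : d * (x / Real.sqrt n + (1/2) * Real.log n - 1 + |Real.log c₂|)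
                = d * x / Real.sqrt n + ((d:ℝ)/2) * Real.log n - d + d * |Real.log c₂| := by
              ring
            linarith [h3, expand.le, expand.ge]
          have h4 : ((d:ℝ)/2) * Real.log (n:ℝ) - ((d:ℝ)/2) * Real.log ((m:ℝ) - K₁)
              ≤ ((d:ℝ)/2) * Real.log 4 := by
            have := mul_le_mul_of_nonneg_left hlog4 (by positivity : (0:ℝ) ≤ (d:ℝ)/2)
            linarith [mul_sub ((d:ℝ)/2) (Real.log (n:ℝ)) (Real.log ((m:ℝ) - K₁)) ▸ this]
          have hd1 : (1:ℝ) ≤ (d:ℝ) := by exact_mod_cast hd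
          rw [hC₀def]
          linarith [hc₁]
        -- step 4: combine
        have hRnonneg : 0 ≤ (d:ℝ) * x / Real.sqrt n + C₀ := by positivity
        have key2 : (t:ℝ) * (c₃ * (Q n - Q m)) ≤ c₃ * d * Real.sqrt n * x + c₃ * C₀ * n := by
          have h1 : (t:ℝ) * (c₃ * (Q n - Q m)) ≤ (n:ℝ) * (c₃ * ((d:ℝ) * x / Real.sqrt n + C₀)) := by
            apply mul_le_mul htn _ (by positivity) (le_of_lt hnpos)
            exact mul_le_mul_of_nonneg_left hbracket (le_of_lt hc₃)
          calc (t:ℝ) * (c₃ * (Q n - Q m)) ≤ (n:ℝ) * (c₃ * ((d:ℝ) * x / Real.sqrt n + C₀)) := h1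
            _ = c₃ * (d:ℝ) * x * ((n:ℝ) / Real.sqrt n) + c₃ * C₀ * n := by ring
            _ = c₃ * d * Real.sqrt n * x + c₃ * C₀ * n := by
                rw [Real.div_sqrt]; ring
        -- abbreviations
        set u : ℝ := Real.sqrt (Real.sqrt n) with hudef
        have hu : 0 ≤ u := Real.sqrt_nonneg _
        have hu2 : u * u = Real.sqrt n := Real.mul_self_sqrt (le_of_lt (Real.sqrt_pos.mpr hnpos))
        set y : ℝ := Real.sqrt x with hydef
        have hy : 0 ≤ y := Real.sqrt_nonneg _
        have hy2 : y * y = x := Real.mul_self_sqrt (le_of_lt hMnpos)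
        have key3 : Real.sqrt ((t:ℝ) * (c₃ * (Q n - Q m))) ≤ F * u * y + E * (u * u) := by
          have h0 : (0:ℝ) ≤ c₃ * d * Real.sqrt n * x := by positivity
          have h0' : (0:ℝ) ≤ c₃ * C₀ * n := by positivity
          calc Real.sqrt ((t:ℝ) * (c₃ * (Q n - Q m)))
              ≤ Real.sqrt (c₃ * d * Real.sqrt n * x + c₃ * C₀ * n) := Real.sqrt_le_sqrt key2
            _ ≤ Real.sqrt (c₃ * d * Real.sqrt n * x) + Real.sqrt (c₃ * C₀ * n) :=
                sqrt_add_le' h0 h0'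
            _ = F * u * y + E * (u * u) := by
                have e1 : Real.sqrt (c₃ * d * Real.sqrt n * x) = F * u * y := by
                  rw [show c₃ * (d:ℝ) * Real.sqrt n * x = (c₃ * d) * (Real.sqrt n * x) by ring]
                  rw [Real.sqrt_mul (by positivity), Real.sqrt_mul (Real.sqrt_nonneg _)]
                  rw [hFdef, hudef, hydef]; ring
                have e2 : Real.sqrt (c₃ * C₀ * n) = E * (u * u) := by
                  rw [show c₃ * C₀ * (n:ℝ) = (c₃ * C₀) * (n:ℝ) by ring]
                  rw [Real.sqrt_mul (by positivity), hEdef, hu2]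
                rw [e1, e2]
        -- step 5: combine to quadratic inequality
        have hsqm : Real.sqrt m ≤ Real.sqrt n / Real.sqrt 2 := by
          calc Real.sqrt m ≤ Real.sqrt ((n:ℝ) / 2) := Real.sqrt_le_sqrt hmhalf
            _ = Real.sqrt n / Real.sqrt 2 := Real.sqrt_div (le_of_lt hnpos) 2
        have hMm : M m ≤ A * (Real.sqrt n / Real.sqrt 2) := by
          calc M m ≤ A * Real.sqrt m := hIH
            _ ≤ A * (Real.sqrt n / Real.sqrt 2) :=
                mul_le_mul_of_nonneg_left hsqm (le_of_lt hA)
        set s2 : ℝ := Real.sqrt 2 with hs2def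
        have hs2sq : s2 * s2 = 2 := Real.mul_self_sqrt (by norm_num)
        have hs2pos : 0 < s2 := Real.sqrt_pos.mpr (by norm_num)
        have hx1 : y * y ≤ A * (u * u) / s2 + E * (u * u) + F * u * y := by
          have hk := key1.trans key3
          have hMm' : M m ≤ A * (u * u) / s2 := by
            rw [hu2, mul_div_assoc] at *
            exact hMm
          linarith [hk, hMm', hy2]
        have hA8 : 8 * (E + 2 * (F * F)) ≤ A := by
          rw [hAdef]
          have hFsq : F ^ 2 = F * F := sq F
          linarith [hB, hFsq.le, hFsq.ge]
        have hfinal : y * y ≤ A * (u * u) :=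
          quadratic_absorb hA hE hF hu hy hs2sq hs2pos hA8 hx1
        calc M n = y * y := hy2.symm
          _ ≤ A * (u * u) := hfinal
          _ = A * Real.sqrt n := by rw [hu2]
  intro n
  exact main n
end
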